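/- arXiv:2202.01538 — 2 statements merged into one kernel-verified Lean document; each statement's English description precedes it below -/
import Mathlib

section
/- For all a > 0, the quotient tanh(a+1)/(tanh(a+1) - tanh(a)) is at most e^{2a}. -/
lemma tanh_eq_aux (x : ℝ) :
    Real.tanh x = (Real.exp (2 * x) - 1) / (Real.exp (2 * x) + 1) := by
  rw [Real.tanh_eq_sinh_div_cosh, Real.sinh_eq, Real.cosh_eq, Real.exp_neg, two_mul,
    Real.exp_add]
  have hx := Real.exp_pos x
  have h1 : 0 < Real.exp x * Real.exp x + 1 := by positivity
  field_simp

/-- For all `a > 0`, `tanh(a+1) / (tanh(a+1) - tanh a) ≤ e^(2a)`. -/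
theorem stmt4 (a : ℝ) (ha : 0 < a) :
    Real.tanh (a + 1) / (Real.tanh (a + 1) - Real.tanh a) ≤ Real.exp (2 * a) := by
  have hv : Real.exp (2 * (a + 1)) = Real.exp (2 * a) * Real.exp 2 := by
    rw [← Real.exp_add]; ring_nf
  set u := Real.exp (2 * a) with hu_def
  set E := Real.exp 2 with hE_def
  have hu : 1 < u := by
    rw [hu_def]
    calc (1:ℝ) = Real.exp 0 := Real.exp_zero.symm
    _ < Real.exp (2 * a) := Real.exp_lt_exp.mpr (by linarith)
  have hE : 3 < E := by
    have := Real.add_one_lt_exp (x := 2) (by norm_num)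
    linarith
  rw [tanh_eq_aux, tanh_eq_aux, hv]
  have h1 : (0:ℝ) < u * E + 1 := by nlinarith
  have h2 : (0:ℝ) < u + 1 := by linarith
  have hdiff : (u * E - 1) / (u * E + 1) - (u - 1) / (u + 1)
      = (2 * u * (E - 1)) / ((u * E + 1) * (u + 1)) := by
    field_simp
    ring
  rw [hdiff]
  have h3 : (0:ℝ) < 2 * u * (E - 1) / ((u * E + 1) * (u + 1)) :=
    div_pos (by nlinarith) (by positivity)
  rw [div_le_iff₀ h3, ← mul_div_assoc, le_div_iff₀ (by positivity)]
  have heq : (u * E - 1) / (u * E + 1) * ((u * E + 1) * (u + 1)) = (u * E - 1) * (u + 1) := by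
    field_simp
  have hfact : 0 ≤ (u - 1) * (u * (E - 2) - 1) :=
    mul_nonneg (by linarith)
      (by nlinarith [mul_nonneg (by linarith : (0:ℝ) ≤ u - 1) (by linarith : (0:ℝ) ≤ E - 2)])
  rw [heq]; nlinarith
end

section
/- For all a > 0, one has ln(tanh((a+1)/2)) / ln(tanh(a/2)) ≤ e⁻¹, and consequently 1/(1 - ln(tanh((a+1)/2))/ln(tanh(a/2))) ≤ 1/(1 - e⁻¹) ≤ 2. -/
/-!
With `t = exp (-a)` one has `log (tanh (a / 2)) = -2 * artanh t`, and passing from `a` to `a + 1`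
replaces `t` by `exp (-1) * t`. Since `artanh` is a power series with nonnegative coefficients and
no constant term, `artanh (c * t) ≤ c * artanh t` for `0 ≤ c ≤ 1`, which bounds the ratio by
`exp (-1)`. The remaining bounds follow from `exp (-1) ≤ 1 / 2`.
-/

open Real

theorem Real.hasSum_artanh {x : ℝ} (hx : |x| < 1) :
    HasSum (fun k : ℕ => x ^ (2 * k + 1) / (2 * k + 1)) (artanh x) := by
  obtain ⟨hx₁, hx₂⟩ := abs_lt.mp hx
  rw [artanh_eq_half_log ⟨hx₁.le, hx₂.le⟩, log_div (by linarith) (by linarith)]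
  have hterm (k : ℕ) : x ^ (2 * k + 1) / (2 * k + 1) =
      1 / 2 * (2 * (1 / (2 * k + 1)) * x ^ (2 * k + 1)) := by
    ring
  rw [funext hterm]
  exact (hasSum_log_sub_log_of_abs_lt_one hx).mul_left (1 / 2)

theorem Real.artanh_mul_le {c x : ℝ} (hc₀ : 0 ≤ c) (hc₁ : c ≤ 1) (hx₀ : 0 ≤ x) (hx₁ : x < 1) :
    artanh (c * x) ≤ c * artanh x := by
  have habs : |x| < 1 := by rwa [abs_of_nonneg hx₀]
  have hcabs : |c * x| < 1 := by
    rw [abs_of_nonneg (mul_nonneg hc₀ hx₀)]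
    nlinarith
  refine hasSum_le (fun k => ?_) (hasSum_artanh hcabs) ((hasSum_artanh habs).mul_left c)
  rw [mul_pow, mul_div_assoc]
  gcongr
  exact pow_le_of_le_one hc₀ hc₁ (by omega)

theorem Real.tanh_half_eq (x : ℝ) : tanh (x / 2) = (1 - exp (-x)) / (1 + exp (-x)) := by
  have hsq : exp (-x) = exp (-(x / 2)) * exp (-(x / 2)) := by rw [← exp_add]; ring_nf
  have hinv : exp (x / 2) * exp (-(x / 2)) = 1 := by rw [← exp_add]; simp
  rw [tanh_eq, ← mul_div_mul_right _ _ (exp_pos (-(x / 2))).ne', hsq]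
  congr 1 <;> linear_combination hinv

theorem Real.log_tanh_half {x : ℝ} (hx : 0 < x) :
    log (tanh (x / 2)) = -2 * artanh (exp (-x)) := by
  have ht : exp (-x) < 1 := exp_lt_one_iff.mpr (by linarith)
  rw [tanh_half_eq, artanh_eq_half_log ⟨by linarith [exp_pos (-x)], ht.le⟩, ← inv_div, log_inv]
  ring

theorem Real.exp_neg_one_le_half : exp (-1) ≤ 1 / 2 := by
  rw [exp_neg, one_div, inv_le_inv₀ (exp_pos 1) two_pos]
  linarith [add_one_le_exp (1 : ℝ)]

theorem inv_one_sub_le_two {r : ℝ} (hr : r ≤ 1 / 2) : (1 - r)⁻¹ ≤ 2 := by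
  rw [inv_le_comm₀ (by linarith) two_pos]
  linarith

/-- For all `a > 0`, `ln(tanh((a+1)/2)) / ln(tanh(a/2)) ≤ e⁻¹`, and consequently
`1/(1 - ln(tanh((a+1)/2))/ln(tanh(a/2))) ≤ 1/(1 - e⁻¹) ≤ 2`. -/
theorem stmt5 (a : ℝ) (ha : 0 < a) :
    Real.log (Real.tanh ((a + 1) / 2)) / Real.log (Real.tanh (a / 2)) ≤ Real.exp (-1) ∧
    (1 - Real.exp (-1))⁻¹ ≤ 2 ∧
    1 / (1 - Real.log (Real.tanh ((a + 1) / 2)) / Real.log (Real.tanh (a / 2))) ≤ 2 := by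
  have hratio : log (tanh ((a + 1) / 2)) / log (tanh (a / 2)) ≤ exp (-1) := by
    have hshift : exp (-(a + 1)) = exp (-1) * exp (-a) := by rw [← exp_add]; ring_nf
    have ht₀ : 0 < exp (-a) := exp_pos _
    have ht₁ : exp (-a) < 1 := exp_lt_one_iff.mpr (by linarith)
    rw [log_tanh_half ha, log_tanh_half (by linarith), hshift,
      mul_div_mul_left _ _ (by norm_num), div_le_iff₀ (artanh_pos ⟨ht₀, ht₁⟩)]
    exact artanh_mul_le (exp_pos _).le (by linarith [exp_neg_one_le_half]) ht₀.le ht₁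
  refine ⟨hratio, inv_one_sub_le_two exp_neg_one_le_half, ?_⟩
  rw [one_div]
  exact inv_one_sub_le_two (hratio.trans exp_neg_one_le_half)
end
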